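/- Fix n ≥ 1, a horizon N ≥ 1, and a time step k ∈ {0,…,N−1}. Let ρ > 0 and C(k) > 0, and let λ_k ∈ ℝ with λ_k C(k) = − Σ_{t=k+1}^{N} Σ_{i=1}^{n} v_{i,t}ᵀ Q_i w_{i,t} − Σ_{i=1}^{n} u_iᵀ R_i u_i, where for each i: Q_i and R_i are symmetric positive definite matrices, v_{i,t} = A_i^{t−k−1} B_i u_i and w_{i,t} = A_i^t x_i + Σ_{j=0}^{t−1} A_i^{t−j−1} B_i u_i(j) for vectors u_i, u_i(j) ∈ ℝ^m (with u_i(k) = u_i) and x_i ∈ ℝ^d. Suppose ‖A_i‖ ≤ α, ‖B_i‖ ≤ β, ‖x_i‖ ≤ γ, ‖Q_i‖ ≤ δ, ‖u_i(j)‖ ≤ √(C(j)/ρ) for all j ∈ {0,…,N−1} and given C(j) ≥ 0 (with C(k) > 0). Then λ_k ≤ (1/C(k)) Σ_{t=k+1}^{N} [ n α^{2t−k−1} β √(C(k)/ρ) δ γ + n β² √(C(k)/ρ) δ Σ_{j=0, j≠k}^{t−1} α^{2t−j−k−2} √(C(j)/ρ) ]. -/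

import Mathlib

/-!
Expanding `w_{i,t}` and splitting off the `j = k` summand of its control sum, that summand is
`v_{i,t}` itself, so the diagonal terms `-vᵀ Q v` and `-uᵀ R u` are nonpositive and can be dropped.
Each remaining term `-⟪v, Q z⟫` is at most `‖v‖ ‖Q‖ ‖z‖` by Cauchy–Schwarz, and the norms of
`v = A^(t-k-1) B u(k)` and of the other summands of `w` are bounded through the operator norms.
-/

open Finset Matrix
open scoped RealInnerProductSpace

/-- The operator norm of a matrix induced by the Euclidean norms. -/
noncomputable def matNorm {d m : ℕ} (M : Matrix (Fin d) (Fin m) ℝ) : ℝ :=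
  ‖LinearMap.toContinuousLinearMap (Matrix.toEuclideanLin M)‖

section OperatorNorm

variable {d e m : ℕ}

lemma matNorm_nonneg (M : Matrix (Fin d) (Fin m) ℝ) : 0 ≤ matNorm M :=
  norm_nonneg _

lemma norm_toEuclideanLin_le (M : Matrix (Fin d) (Fin m) ℝ) (z : EuclideanSpace ℝ (Fin m)) :
    ‖toEuclideanLin M z‖ ≤ matNorm M * ‖z‖ :=
  (LinearMap.toContinuousLinearMap (toEuclideanLin M)).le_opNorm z

lemma norm_toEuclideanLin_le_of_le {M : Matrix (Fin d) (Fin m) ℝ} {z : EuclideanSpace ℝ (Fin m)}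
    {a c : ℝ} (hM : matNorm M ≤ a) (hz : ‖z‖ ≤ c) : ‖toEuclideanLin M z‖ ≤ a * c :=
  (norm_toEuclideanLin_le M z).trans
    (mul_le_mul hM hz (norm_nonneg _) ((matNorm_nonneg M).trans hM))

lemma toEuclideanLin_mul_apply (M : Matrix (Fin d) (Fin e) ℝ) (P : Matrix (Fin e) (Fin m) ℝ)
    (z : EuclideanSpace ℝ (Fin m)) :
    toEuclideanLin (M * P) z = toEuclideanLin M (toEuclideanLin P z) := by
  simp [toLpLin_apply, mulVec_mulVec]

lemma norm_toEuclideanLin_pow_le_of_le {A : Matrix (Fin d) (Fin d) ℝ}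
    {z : EuclideanSpace ℝ (Fin d)} {α c : ℝ} (hA : matNorm A ≤ α) (hz : ‖z‖ ≤ c) (p : ℕ) :
    ‖toEuclideanLin (A ^ p) z‖ ≤ α ^ p * c := by
  induction p with
  | zero => simpa [toLpLin_apply] using hz
  | succ p ih =>
    rw [pow_succ', toEuclideanLin_mul_apply, pow_succ', mul_assoc]
    exact norm_toEuclideanLin_le_of_le hA ih

lemma norm_toEuclideanLin_pow_mul_le_of_le {A : Matrix (Fin d) (Fin d) ℝ}
    {B : Matrix (Fin d) (Fin m) ℝ} {z : EuclideanSpace ℝ (Fin m)} {α β c : ℝ}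
    (hA : matNorm A ≤ α) (hB : matNorm B ≤ β) (hz : ‖z‖ ≤ c) (p : ℕ) :
    ‖toEuclideanLin (A ^ p * B) z‖ ≤ α ^ p * (β * c) := by
  rw [toEuclideanLin_mul_apply]
  exact norm_toEuclideanLin_pow_le_of_le hA (norm_toEuclideanLin_le_of_le hB hz) p

lemma neg_inner_toEuclideanLin_le {Q : Matrix (Fin d) (Fin d) ℝ} {y z : EuclideanSpace ℝ (Fin d)}
    {a δ c : ℝ} (hy : ‖y‖ ≤ a) (hQ : matNorm Q ≤ δ) (hz : ‖z‖ ≤ c) :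
    -⟪y, toEuclideanLin Q z⟫ ≤ a * (δ * c) :=
  calc -⟪y, toEuclideanLin Q z⟫ ≤ ‖y‖ * ‖toEuclideanLin Q z‖ :=
        (neg_le_abs _).trans (abs_real_inner_le_norm _ _)
    _ ≤ a * (δ * c) :=
        mul_le_mul hy (norm_toEuclideanLin_le_of_le hQ hz) (norm_nonneg _)
          ((norm_nonneg _).trans hy)

end OperatorNorm

lemma neg_inner_response_state_le {d m k t : ℕ} {A Q : Matrix (Fin d) (Fin d) ℝ}
    {B : Matrix (Fin d) (Fin m) ℝ} {x : EuclideanSpace ℝ (Fin d)}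
    {u : ℕ → EuclideanSpace ℝ (Fin m)} {s : ℕ → ℝ} {α β γ δ : ℝ}
    (hA : matNorm A ≤ α) (hB : matNorm B ≤ β) (hQ : Q.PosSemidef) (hQn : matNorm Q ≤ δ)
    (hx : ‖x‖ ≤ γ) (hu : ∀ j < t, ‖u j‖ ≤ s j) (hkt : k < t) :
    -⟪toEuclideanLin (A ^ (t - k - 1) * B) (u k), toEuclideanLin Q
        (toEuclideanLin (A ^ t) x + ∑ j ∈ range t, toEuclideanLin (A ^ (t - j - 1) * B) (u j))⟫
      ≤ α ^ (2 * t - k - 1) * β * s k * δ * γ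
        + β ^ 2 * s k * δ * ∑ j ∈ (range t).erase k, α ^ (2 * t - j - k - 2) * s j := by
  set f : ℕ → EuclideanSpace ℝ (Fin d) := fun j => toEuclideanLin (A ^ (t - j - 1) * B) (u j)
  have hf : ∀ j < t, ‖f j‖ ≤ α ^ (t - j - 1) * (β * s j) := fun j hj =>
    norm_toEuclideanLin_pow_mul_le_of_le hA hB (hu j hj) _
  have hsplit : ⟪f k, toEuclideanLin Q (toEuclideanLin (A ^ t) x + ∑ j ∈ range t, f j)⟫
      = ⟪f k, toEuclideanLin Q (toEuclideanLin (A ^ t) x)⟫ + ⟪f k, toEuclideanLin Q (f k)⟫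
        + ∑ j ∈ (range t).erase k, ⟪f k, toEuclideanLin Q (f j)⟫ := by
    rw [map_add, inner_add_right, map_sum, inner_sum, ← add_sum_erase _ _ (mem_range.2 hkt),
      add_assoc]
  have hdiag : 0 ≤ ⟪f k, toEuclideanLin Q (f k)⟫ :=
    (isPositive_toEuclideanLin_iff.mpr hQ).inner_nonneg_right _
  have hfree : -⟪f k, toEuclideanLin Q (toEuclideanLin (A ^ t) x)⟫
      ≤ α ^ (2 * t - k - 1) * β * s k * δ * γ := by
    calc _ ≤ α ^ (t - k - 1) * (β * s k) * (δ * (α ^ t * γ)) :=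
          neg_inner_toEuclideanLin_le (hf k hkt) hQn (norm_toEuclideanLin_pow_le_of_le hA hx t)
      _ = _ := by rw [show 2 * t - k - 1 = (t - k - 1) + t by omega, pow_add]; ring
  have hcross : ∀ j ∈ (range t).erase k, -⟪f k, toEuclideanLin Q (f j)⟫
      ≤ β ^ 2 * s k * δ * (α ^ (2 * t - j - k - 2) * s j) := by
    intro j hj
    have hjt : j < t := mem_range.1 (mem_of_mem_erase hj)
    calc _ ≤ α ^ (t - k - 1) * (β * s k) * (δ * (α ^ (t - j - 1) * (β * s j))) :=
          neg_inner_toEuclideanLin_le (hf k hkt) hQn (hf j hjt)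
      _ = _ := by rw [show 2 * t - j - k - 2 = (t - k - 1) + (t - j - 1) by omega, pow_add]; ring
  have hcross_sum := sum_le_sum hcross
  rw [sum_neg_distrib, ← mul_sum] at hcross_sum
  rw [hsplit]
  linarith

theorem stmt_15_general {d m : ℕ} (n N k : ℕ)
    (ρ : ℝ)
    (C : ℕ → ℝ) (hCk : 0 < C k)
    (α β γ δ : ℝ)
    (A : Fin n → Matrix (Fin d) (Fin d) ℝ) (hA : ∀ i, matNorm (A i) ≤ α)
    (B : Fin n → Matrix (Fin d) (Fin m) ℝ) (hB : ∀ i, matNorm (B i) ≤ β)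
    (Q : Fin n → Matrix (Fin d) (Fin d) ℝ) (hQ : ∀ i, (Q i).PosDef)
    (hQn : ∀ i, matNorm (Q i) ≤ δ)
    (R : Fin n → Matrix (Fin m) (Fin m) ℝ) (hR : ∀ i, (R i).PosDef)
    (x : Fin n → EuclideanSpace ℝ (Fin d)) (hx : ∀ i, ‖x i‖ ≤ γ)
    (u : Fin n → ℕ → EuclideanSpace ℝ (Fin m))
    (hu : ∀ i, ∀ j, j < N → ‖u i j‖ ≤ Real.sqrt (C j / ρ))
    (v : Fin n → ℕ → EuclideanSpace ℝ (Fin d))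
    (hv : ∀ i t, v i t = Matrix.toEuclideanLin ((A i) ^ (t - k - 1) * B i) (u i k))
    (w : Fin n → ℕ → EuclideanSpace ℝ (Fin d))
    (hw : ∀ i t, w i t = Matrix.toEuclideanLin ((A i) ^ t) (x i)
        + ∑ j ∈ range t, Matrix.toEuclideanLin ((A i) ^ (t - j - 1) * B i) (u i j))
    (lam : ℝ)
    (hlam : lam * C k
      = - ∑ t ∈ Icc (k + 1) N, ∑ i, ⟪v i t, Matrix.toEuclideanLin (Q i) (w i t)⟫
        - ∑ i, ⟪u i k, Matrix.toEuclideanLin (R i) (u i k)⟫) :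
    lam ≤ (1 / C k) * ∑ t ∈ Icc (k + 1) N,
        ((n : ℝ) * α ^ (2 * t - k - 1) * β * Real.sqrt (C k / ρ) * δ * γ
          + (n : ℝ) * β ^ 2 * Real.sqrt (C k / ρ) * δ
            * ∑ j ∈ (range t).erase k, α ^ (2 * t - j - k - 2) * Real.sqrt (C j / ρ)) := by
  rw [one_div_mul_eq_div, le_div_iff₀ hCk, hlam]
  have hcontrol : 0 ≤ ∑ i, ⟪u i k, toEuclideanLin (R i) (u i k)⟫ :=
    sum_nonneg fun i _ => (isPositive_toEuclideanLin_iff.mpr (hR i).posSemidef).inner_nonneg_right _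
  have hstate : ∀ t ∈ Icc (k + 1) N, -∑ i, ⟪v i t, toEuclideanLin (Q i) (w i t)⟫
      ≤ n * α ^ (2 * t - k - 1) * β * Real.sqrt (C k / ρ) * δ * γ
        + n * β ^ 2 * Real.sqrt (C k / ρ) * δ
          * ∑ j ∈ (range t).erase k, α ^ (2 * t - j - k - 2) * Real.sqrt (C j / ρ) := by
    intro t ht
    obtain ⟨hkt, htN⟩ := mem_Icc.1 ht
    calc -∑ i, ⟪v i t, toEuclideanLin (Q i) (w i t)⟫
        = ∑ i, -⟪v i t, toEuclideanLin (Q i) (w i t)⟫ := (sum_neg_distrib _).symm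
      _ ≤ ∑ _i : Fin n, (α ^ (2 * t - k - 1) * β * Real.sqrt (C k / ρ) * δ * γ
          + β ^ 2 * Real.sqrt (C k / ρ) * δ
            * ∑ j ∈ (range t).erase k, α ^ (2 * t - j - k - 2) * Real.sqrt (C j / ρ)) :=
          sum_le_sum fun i _ => ?_
      _ = _ := by rw [sum_const, card_univ, Fintype.card_fin, nsmul_eq_mul]; ring
    rw [hv, hw]
    exact neg_inner_response_state_le (hA i) (hB i) (hQ i).posSemidef (hQn i) (hx i)
      (fun j hj => hu i j (by omega)) hkt
  have hstate_sum := sum_le_sum hstate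
  rw [sum_neg_distrib] at hstate_sum
  linarith

/-- the central estimate (from equation (25) to equation (24)) in the proof
of Theorem 2: the explicit price formula together with the stated norm bounds yields the
upper bound on `λ_k`. -/
theorem stmt_15 {d m : ℕ} (n N k : ℕ) (hn : 1 ≤ n) (hN : 1 ≤ N) (hk : k < N)
    (ρ : ℝ) (hρ : 0 < ρ)
    (C : ℕ → ℝ) (hCk : 0 < C k) (hC : ∀ j, 0 ≤ C j)
    (α β γ δ : ℝ)
    (A : Fin n → Matrix (Fin d) (Fin d) ℝ) (hA : ∀ i, matNorm (A i) ≤ α)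
    (B : Fin n → Matrix (Fin d) (Fin m) ℝ) (hB : ∀ i, matNorm (B i) ≤ β)
    (Q : Fin n → Matrix (Fin d) (Fin d) ℝ) (hQ : ∀ i, (Q i).PosDef)
    (hQn : ∀ i, matNorm (Q i) ≤ δ)
    (R : Fin n → Matrix (Fin m) (Fin m) ℝ) (hR : ∀ i, (R i).PosDef)
    (x : Fin n → EuclideanSpace ℝ (Fin d)) (hx : ∀ i, ‖x i‖ ≤ γ)
    (u : Fin n → ℕ → EuclideanSpace ℝ (Fin m))
    (hu : ∀ i, ∀ j, j < N → ‖u i j‖ ≤ Real.sqrt (C j / ρ))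
    (v : Fin n → ℕ → EuclideanSpace ℝ (Fin d))
    (hv : ∀ i t, v i t = Matrix.toEuclideanLin ((A i) ^ (t - k - 1) * B i) (u i k))
    (w : Fin n → ℕ → EuclideanSpace ℝ (Fin d))
    (hw : ∀ i t, w i t = Matrix.toEuclideanLin ((A i) ^ t) (x i)
        + ∑ j ∈ range t, Matrix.toEuclideanLin ((A i) ^ (t - j - 1) * B i) (u i j))
    (lam : ℝ)
    (hlam : lam * C k
      = - ∑ t ∈ Icc (k + 1) N, ∑ i, ⟪v i t, Matrix.toEuclideanLin (Q i) (w i t)⟫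
        - ∑ i, ⟪u i k, Matrix.toEuclideanLin (R i) (u i k)⟫) :
    lam ≤ (1 / C k) * ∑ t ∈ Icc (k + 1) N,
        ((n : ℝ) * α ^ (2 * t - k - 1) * β * Real.sqrt (C k / ρ) * δ * γ
          + (n : ℝ) * β ^ 2 * Real.sqrt (C k / ρ) * δ
            * ∑ j ∈ (range t).erase k, α ^ (2 * t - j - k - 2) * Real.sqrt (C j / ρ)) :=
  stmt_15_general n N k ρ C hCk α β γ δ A hA B hB Q hQ hQn R hR x hx u hu v hv w hw lam hlam
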